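/- Let d=1, p>1, x∈ℝ and 0<R<1, and let φ∈C⁴_b((x−R, x+R)) satisfy φ'≠0 on [x−R, x+R]. Set R₀ := (inf_{(x−R,x+R)}|φ'|)/‖φ''‖_{L^∞((x−R,x+R))}. Then there exists a constant C>0, depending only on p and ‖φ‖_{C⁴_b((x−R,x+R))}, such that for every 0<r<min{R₀, R/2}: |D_r[φ](x) − (p−1)|φ'(x)|^{p−2}φ''(x)| ≤ C ((inf_{(x−R,x+R)}|φ'|)^{p−4} + 1) r², where D_r[φ](x) := (J_p(φ(x+r)−φ(x)) + J_p(φ(x−r)−φ(x)))/r^p. -/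

import Mathlib

open MeasureTheory Metric Filter
open scoped Topology

noncomputable section

/-- `J_p(ξ) = |ξ|^{p-2} ξ`. -/
def Jp (p ξ : ℝ) : ℝ := |ξ| ^ (p - 2) * ξ

/-- `φ ∈ C⁴_b(s)` (for `φ : ℝ → ℝ`) with `‖φ‖_{C⁴_b(s)} ≤ M`. -/
def C4bOn1 (φ : ℝ → ℝ) (s : Set ℝ) (M : ℝ) : Prop :=
  ContDiffOn ℝ 4 φ s ∧ ∀ k : ℕ, k ≤ 4 → ∀ y ∈ s, |iteratedDerivWithin k φ s y| ≤ M

/-- `M^p_{r,1}[φ](x)` in dimension one. -/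
def Mr1D (p r : ℝ) (φ : ℝ → ℝ) (x : ℝ) : ℝ :=
  (Jp p (φ (x + r) - φ x) + Jp p (φ (x - r) - φ x)) / r ^ p

/-- `M^p_{r,2}[φ](x)` in dimension one (`κ_{p,1} = 2`). -/
def Mr2D (p r : ℝ) (φ : ℝ → ℝ) (x : ℝ) : ℝ :=
  ((p + 1) * 2 / r ^ p) * ((1 / (2 * r)) * ∫ y in Set.Ioo (-r) r, Jp p (φ (x + y) - φ x))

/-- `inf_{y ∈ s} |φ'(y)|`. -/
def derivInfOn (φ : ℝ → ℝ) (s : Set ℝ) : ℝ := sInf ((fun y => |deriv φ y|) '' s)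

/-- `‖φ''‖_{L^∞(s)}`. -/
def deriv2SupOn (φ : ℝ → ℝ) (s : Set ℝ) : ℝ := sSup ((fun y => |deriv (deriv φ) y|) '' s)

/-- `D_r[φ](x) = (J_p(φ(x+r)−φ(x)) + J_p(φ(x−r)−φ(x)))/r^p`. -/
def DrOp (p r : ℝ) (φ : ℝ → ℝ) (x : ℝ) : ℝ :=
  (Jp p (φ (x + r) - φ x) + Jp p (φ (x - r) - φ x)) / r ^ p

open intervalIntegral

lemma iteratedDerivWithin_isOpen' {f : ℝ → ℝ} {s : Set ℝ} {x : ℝ} (n : ℕ) (hs : IsOpen s)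
    (hx : x ∈ s) : iteratedDerivWithin n f s x = iteratedDeriv n f x := by
  rw [iteratedDerivWithin_eq_iteratedFDerivWithin, iteratedDeriv_eq_iteratedFDeriv,
    iteratedFDerivWithin_of_isOpen n hs hx]

/-- Mean-value style step: if `F x = 0` and `|F'| ≤ L |y-x|^k` on a convex set,
then `|F z| ≤ L |z-x|^(k+1) / (k+1)`. -/
lemma mvt_step {s : Set ℝ} (hs : Convex ℝ s) {F F' : ℝ → ℝ} {x : ℝ} (hx : x ∈ s)
    (hF : ∀ y ∈ s, HasDerivAt F (F' y) y) (hF'c : ContinuousOn F' s)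
    (hFx : F x = 0) {L : ℝ} (k : ℕ)
    (hL : ∀ y ∈ s, |F' y| ≤ L * |y - x| ^ k)
    {z : ℝ} (hz : z ∈ s) : |F z| ≤ L * |z - x| ^ (k + 1) / (k + 1) := by
  have huIcc : Set.uIcc x z ⊆ s := hs.ordConnected.uIcc_subset hx hz
  have hint : IntervalIntegrable F' volume x z :=
    (hF'c.mono huIcc).intervalIntegrable
  have hFTC : ∫ y in x..z, F' y = F z - F x :=
    integral_eq_sub_of_hasDerivAt (fun y hy => hF y (huIcc hy)) hint
  have hFz : F z = ∫ y in x..z, F' y := by rw [hFTC, hFx, sub_zero]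
  rcases le_total x z with hxz | hxz
  · rw [hFz]
    have h1 : |∫ y in x..z, F' y| ≤ ∫ y in x..z, |F' y| :=
      abs_integral_le_integral_abs hxz
    have h2 : (∫ y in x..z, |F' y|) ≤ ∫ y in x..z, L * (y - x) ^ k := by
      apply integral_mono_on hxz hint.abs
      · exact ((continuous_const.mul ((continuous_id.sub continuous_const).pow k)).intervalIntegrable x z)
      · intro y hy
        have := hL y (hs.ordConnected.out hx hz ⟨hy.1, hy.2⟩)
        rwa [abs_of_nonneg (by linarith [hy.1] : (0:ℝ) ≤ y - x)] at this
    have h3 : (∫ y in x..z, L * (y - x) ^ k) = L * (z - x) ^ (k + 1) / (k + 1) := by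
      rw [intervalIntegral.integral_const_mul]
      have : (∫ y in x..z, (y - x) ^ k) = ∫ y in (x - x)..(z - x), y ^ k :=
        integral_comp_sub_right (fun y => y ^ k) x
      rw [this, integral_pow]
      simp
      ring
    have : |z - x| = z - x := abs_of_nonneg (by linarith)
    rw [this]
    calc |∫ y in x..z, F' y| ≤ ∫ y in x..z, |F' y| := h1
      _ ≤ ∫ y in x..z, L * (y - x) ^ k := h2
      _ = L * (z - x) ^ (k + 1) / (k + 1) := h3
  · rw [hFz, integral_symm]
    rw [abs_neg]
    have h1 : |∫ y in z..x, F' y| ≤ ∫ y in z..x, |F' y| :=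
      abs_integral_le_integral_abs hxz
    have h2 : (∫ y in z..x, |F' y|) ≤ ∫ y in z..x, L * (x - y) ^ k := by
      apply integral_mono_on hxz hint.symm.abs
      · exact ((continuous_const.mul ((continuous_const.sub continuous_id).pow k)).intervalIntegrable z x)
      · intro y hy
        have := hL y (hs.ordConnected.out hz hx ⟨hy.1, hy.2⟩)
        rwa [abs_sub_comm, abs_of_nonneg (by linarith [hy.2] : (0:ℝ) ≤ x - y)] at this
    have h3 : (∫ y in z..x, L * (x - y) ^ k) = L * (x - z) ^ (k + 1) / (k + 1) := by
      rw [intervalIntegral.integral_const_mul]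
      have : (∫ y in z..x, (x - y) ^ k) = ∫ y in (x - x)..(x - z), y ^ k :=
        integral_comp_sub_left (fun y => y ^ k) x
      rw [this, integral_pow]
      simp
      ring
    have : |z - x| = x - z := by rw [abs_sub_comm]; exact abs_of_nonneg (by linarith)
    rw [this]
    calc |∫ y in z..x, F' y| ≤ ∫ y in z..x, |F' y| := h1
      _ ≤ ∫ y in z..x, L * (x - y) ^ k := h2
      _ = L * (x - z) ^ (k + 1) / (k + 1) := h3

lemma taylor2_bound' {s : Set ℝ} (hs : Convex ℝ s) {f f1 f2 : ℝ → ℝ} {x : ℝ} (hx : x ∈ s)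
    (h1 : ∀ y ∈ s, HasDerivAt f (f1 y) y) (h2 : ∀ y ∈ s, HasDerivAt f1 (f2 y) y)
    (hc : ContinuousOn f2 s)
    {K : ℝ} (hK : ∀ y ∈ s, |f2 y| ≤ K) {z : ℝ} (hz : z ∈ s) :
    |f z - f x - f1 x * (z - x)| ≤ K * |z - x| ^ 2 / 2 := by
  have cf1 : ContinuousOn f1 s := fun y hy => (h2 y hy).continuousAt.continuousWithinAt
  have step1 : ∀ y ∈ s, |f1 y - f1 x| ≤ K * |y - x| ^ 1 := by
    intro y hy
    have := mvt_step hs hx (F := fun y => f1 y - f1 x) (F' := f2)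
      (fun y hy => (h2 y hy).sub_const _) hc (by simp) 0
      (fun y hy => by simpa using hK y hy) hy
    simpa using this
  have step2 := mvt_step hs hx (F := fun y => f y - f x - f1 x * (y - x))
      (F' := fun y => f1 y - f1 x)
      (fun y hy => by
        have h' := ((h1 y hy).sub_const (f x)).sub
          (((hasDerivAt_id y).sub_const x).const_mul (f1 x))
        exact h'.congr_deriv (by simp only [id_eq, mul_one]))
      (cf1.sub continuousOn_const)
      (by simp) 1 step1 hz
  calc |f z - f x - f1 x * (z - x)| ≤ K * |z - x| ^ (1+1) / (1+1) := by exact_mod_cast step2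
    _ = K * |z - x| ^ 2 / 2 := by norm_num

lemma taylor4_bound' {s : Set ℝ} (hs : Convex ℝ s) {f f1 f2 f3 f4 : ℝ → ℝ} {x : ℝ} (hx : x ∈ s)
    (h1 : ∀ y ∈ s, HasDerivAt f (f1 y) y) (h2 : ∀ y ∈ s, HasDerivAt f1 (f2 y) y)
    (h3 : ∀ y ∈ s, HasDerivAt f2 (f3 y) y) (h4 : ∀ y ∈ s, HasDerivAt f3 (f4 y) y)
    (hc : ContinuousOn f4 s)
    {K : ℝ} (hK : ∀ y ∈ s, |f4 y| ≤ K) {z : ℝ} (hz : z ∈ s) :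
    |f z - f x - f1 x * (z - x) - f2 x * (z - x) ^ 2 / 2 - f3 x * (z - x) ^ 3 / 6| ≤
      K * |z - x| ^ 4 / 24 := by
  have cf1 : ContinuousOn f1 s := fun y hy => (h2 y hy).continuousAt.continuousWithinAt
  have cf2 : ContinuousOn f2 s := fun y hy => (h3 y hy).continuousAt.continuousWithinAt
  have cf3 : ContinuousOn f3 s := fun y hy => (h4 y hy).continuousAt.continuousWithinAt
  have clin : ContinuousOn (fun y : ℝ => y - x) s := continuousOn_id.sub continuousOn_const
  have step1 : ∀ y ∈ s, |f3 y - f3 x| ≤ K * |y - x| ^ 1 := by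
    intro y hy
    have := mvt_step hs hx (F := fun y => f3 y - f3 x) (F' := f4)
      (fun y hy => (h4 y hy).sub_const _) hc (by simp) 0
      (fun y hy => by simpa using hK y hy) hy
    simpa using this
  have step2 : ∀ y ∈ s, |f2 y - f2 x - f3 x * (y - x)| ≤ (K / 2) * |y - x| ^ 2 := by
    intro y hy
    have := mvt_step hs hx (F := fun y => f2 y - f2 x - f3 x * (y - x))
      (F' := fun y => f3 y - f3 x)
      (fun y hy => by
        have h' := ((h3 y hy).sub_const (f2 x)).sub
          (((hasDerivAt_id y).sub_const x).const_mul (f3 x))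
        exact h'.congr_deriv (by simp only [id_eq, mul_one]))
      (cf3.sub continuousOn_const)
      (by simp) 1 step1 hy
    calc |f2 y - f2 x - f3 x * (y - x)| ≤ K * |y - x| ^ (1+1) / (1+1) := by simpa using this
      _ = (K / 2) * |y - x| ^ 2 := by norm_num; ring
  have step3 : ∀ y ∈ s, |f1 y - f1 x - f2 x * (y - x) - f3 x * (y - x) ^ 2 / 2| ≤
      (K / 6) * |y - x| ^ 3 := by
    intro y hy
    have := mvt_step hs hx (F := fun y => f1 y - f1 x - f2 x * (y - x) - f3 x * (y - x) ^ 2 / 2)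
      (F' := fun y => f2 y - f2 x - f3 x * (y - x))
      (fun y hy => by
        have h' := (((h2 y hy).sub_const (f1 x)).sub
          (((hasDerivAt_id y).sub_const x).const_mul (f2 x))).sub
          (((((hasDerivAt_id y).sub_const x).pow 2).const_mul (f3 x)).div_const 2)
        exact h'.congr_deriv (by simp only [id_eq, mul_one]; ring))
      ((cf2.sub continuousOn_const).sub (continuousOn_const.mul clin))
      (by simp) 2 step2 hy
    calc |f1 y - f1 x - f2 x * (y - x) - f3 x * (y - x) ^ 2 / 2|
        ≤ (K / 2) * |y - x| ^ (2+1) / (2+1) := this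
      _ = (K / 6) * |y - x| ^ 3 := by norm_num; ring
  have step4 := mvt_step hs hx
      (F := fun y => f y - f x - f1 x * (y - x) - f2 x * (y - x) ^ 2 / 2 - f3 x * (y - x) ^ 3 / 6)
      (F' := fun y => f1 y - f1 x - f2 x * (y - x) - f3 x * (y - x) ^ 2 / 2)
      (fun y hy => by
        have h' := ((((h1 y hy).sub_const (f x)).sub
          (((hasDerivAt_id y).sub_const x).const_mul (f1 x))).sub
          (((((hasDerivAt_id y).sub_const x).pow 2).const_mul (f2 x)).div_const 2)).sub
          (((((hasDerivAt_id y).sub_const x).pow 3).const_mul (f3 x)).div_const 6)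
        exact h'.congr_deriv (by simp only [id_eq, mul_one]; ring))
      (((cf1.sub continuousOn_const).sub (continuousOn_const.mul clin)).sub
        ((continuousOn_const.mul (clin.pow 2)).div_const 2))
      (by simp) 3 step3 hz
  calc |f z - f x - f1 x * (z - x) - f2 x * (z - x) ^ 2 / 2 - f3 x * (z - x) ^ 3 / 6|
      ≤ (K / 6) * |z - x| ^ (3+1) / (3+1) := step4
    _ = K * |z - x| ^ 4 / 24 := by norm_num; ring

lemma two_rpow_bound {a e : ℝ} (h1 : 1/2 ≤ a) (h2 : a ≤ 2) : a ^ e ≤ (2:ℝ) ^ |e| := by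
  rcases le_or_gt 0 e with he | he
  · rw [abs_of_nonneg he]
    exact Real.rpow_le_rpow (by linarith) h2 he
  · rw [abs_of_neg he]
    calc a ^ e ≤ (1/2 : ℝ) ^ e := Real.rpow_le_rpow_of_nonpos (by norm_num) h1 he.le
      _ = ((2:ℝ)⁻¹) ^ e := by norm_num
      _ = ((2:ℝ) ^ e)⁻¹ := Real.inv_rpow (by norm_num) e
      _ = (2:ℝ) ^ (-e) := (Real.rpow_neg (by norm_num) e).symm

lemma hfun_cubic (p : ℝ) {t : ℝ} (ht : t ∈ Set.Icc (-(1/2):ℝ) (1/2)) :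
    |(1+t) ^ (p-1) - 1 - (p-1)*t - ((p-1)*(p-2)/2)*t^2| ≤
      (|p-1| * |p-2| * |p-3| * (2:ℝ) ^ |p-4|) * |t|^3 / 6 := by
  set s : Set ℝ := Set.Icc (-(1/2):ℝ) (1/2) with hs_def
  have hs : Convex ℝ s := convex_Icc _ _
  have hx : (0:ℝ) ∈ s := by constructor <;> norm_num
  set K3 : ℝ := |p-1| * |p-2| * |p-3| * (2:ℝ) ^ |p-4| with hK3_def
  have hbase : ∀ y ∈ s, (1:ℝ)/2 ≤ 1 + y ∧ 1 + y ≤ 2 := by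
    rintro y ⟨hy1, hy2⟩; constructor <;> linarith
  have hne : ∀ y ∈ s, (1:ℝ) + y ≠ 0 := fun y hy => by linarith [(hbase y hy).1]
  have hdpow : ∀ q : ℝ, ∀ y ∈ s, HasDerivAt (fun z => (1+z) ^ q) (q * (1+y) ^ (q-1)) y := by
    intro q y hy
    have h0 : HasDerivAt (fun z : ℝ => 1 + z) 1 y := by
      simpa using (hasDerivAt_id y).const_add (1:ℝ)
    have := h0.rpow_const (p := q) (Or.inl (hne y hy))
    convert this using 1; ring
  have hd1 : ∀ y ∈ s, HasDerivAt
      (fun z => (1+z) ^ (p-1) - 1 - (p-1)*z - ((p-1)*(p-2)/2)*z^2)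
      ((p-1)*(1+y) ^ (p-2) - (p-1) - (p-1)*(p-2)*y) y := by
    intro y hy
    have h' := (((hdpow (p-1) y hy).sub_const 1).sub ((hasDerivAt_id y).const_mul (p-1))).sub
      (((hasDerivAt_pow 2 y)).const_mul ((p-1)*(p-2)/2))
    refine h'.congr_deriv ?_
    rw [show p - 1 - 1 = p - 2 by ring]
    push_cast; ring
  have hd2 : ∀ y ∈ s, HasDerivAt
      (fun z => (p-1)*(1+z) ^ (p-2) - (p-1) - (p-1)*(p-2)*z)
      ((p-1)*(p-2)*(1+y) ^ (p-3) - (p-1)*(p-2)) y := by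
    intro y hy
    have h' := (((hdpow (p-2) y hy).const_mul (p-1)).sub_const (p-1)).sub
      ((hasDerivAt_id y).const_mul ((p-1)*(p-2)))
    refine h'.congr_deriv ?_
    rw [show p - 2 - 1 = p - 3 by ring]
    ring
  have hd3 : ∀ y ∈ s, HasDerivAt
      (fun z => (p-1)*(p-2)*(1+z) ^ (p-3) - (p-1)*(p-2))
      ((p-1)*(p-2)*(p-3)*(1+y) ^ (p-4)) y := by
    intro y hy
    have h' := ((hdpow (p-3) y hy).const_mul ((p-1)*(p-2))).sub_const ((p-1)*(p-2))
    refine h'.congr_deriv ?_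
    rw [show p - 3 - 1 = p - 4 by ring]
    ring
  have hF3bound : ∀ y ∈ s, |(p-1)*(p-2)*(p-3)*(1+y) ^ (p-4)| ≤ K3 := by
    intro y hy
    have h1 : |(1+y) ^ (p-4)| = (1+y) ^ (p-4) :=
      abs_of_nonneg (Real.rpow_nonneg (by linarith [(hbase y hy).1]) _)
    calc |(p-1)*(p-2)*(p-3)*(1+y) ^ (p-4)|
        = |p-1| * |p-2| * |p-3| * ((1+y) ^ (p-4)) := by
          rw [abs_mul, abs_mul, abs_mul, h1]
      _ ≤ |p-1| * |p-2| * |p-3| * (2:ℝ) ^ |p-4| :=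
          mul_le_mul_of_nonneg_left (two_rpow_bound (hbase y hy).1 (hbase y hy).2)
            (by positivity)
  have cF3 : ContinuousOn (fun z : ℝ => (p-1)*(p-2)*(p-3)*(1+z) ^ (p-4)) s := by
    apply ContinuousOn.mul continuousOn_const
    exact ContinuousOn.rpow_const (by fun_prop) (fun y hy => Or.inl (hne y hy))
  have step1 : ∀ y ∈ s, |(p-1)*(p-2)*(1+y) ^ (p-3) - (p-1)*(p-2)| ≤ K3 * |y| ^ 1 := by
    intro y hy
    have := mvt_step hs hx hd3 cF3 (by norm_num) 0
      (fun y hy => by simpa using hF3bound y hy) hy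
    simpa using this
  have step2 : ∀ y ∈ s, |(p-1)*(1+y) ^ (p-2) - (p-1) - (p-1)*(p-2)*y| ≤ (K3/2) * |y| ^ 2 := by
    intro y hy
    have := mvt_step hs hx hd2
      (fun y hy => ((hd3 y hy).continuousAt.continuousWithinAt))
      (by norm_num) 1 (fun y hy => by simpa using step1 y hy) hy
    calc |(p-1)*(1+y) ^ (p-2) - (p-1) - (p-1)*(p-2)*y| ≤ K3 * |y - 0| ^ (1+1) / (1+1) := by
          exact_mod_cast this
      _ = (K3/2) * |y| ^ 2 := by rw [sub_zero]; ring
  have step3 := mvt_step hs hx hd1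
      (fun y hy => ((hd2 y hy).continuousAt.continuousWithinAt))
      (by norm_num) 2 (fun y hy => by simpa using step2 y hy) ht
  calc |(1+t) ^ (p-1) - 1 - (p-1)*t - ((p-1)*(p-2)/2)*t^2|
      ≤ (K3/2) * |t - 0| ^ (2+1) / (2+1) := by exact_mod_cast step3
    _ = K3 * |t|^3 / 6 := by rw [sub_zero]; ring

lemma rpow_interp {i b M e f : ℝ} (hi : 0 < i) (hib : i ≤ b) (hbM : b ≤ M) (hf : 0 ≤ f) :
    b ^ e ≤ (M ^ e + M ^ f) * (i ^ (e - f) + 1) := by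
  have hb : 0 < b := lt_of_lt_of_le hi hib
  have hM : 0 < M := lt_of_lt_of_le hb hbM
  rcases le_or_gt 0 e with he | he
  · have h1 : b ^ e ≤ M ^ e := Real.rpow_le_rpow hb.le hbM he
    have h2 : (0:ℝ) ≤ M ^ f := (Real.rpow_pos_of_pos hM f).le
    have h3 : (0:ℝ) ≤ i ^ (e-f) := (Real.rpow_pos_of_pos hi _).le
    nlinarith [(Real.rpow_pos_of_pos hM e).le]
  · have h1 : b ^ e ≤ i ^ e := Real.rpow_le_rpow_of_nonpos hi hib he.le
    have h2 : i ^ e = i ^ (e - f) * i ^ f := by rw [← Real.rpow_add hi]; congr 1; ring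
    have h3 : i ^ f ≤ M ^ f := Real.rpow_le_rpow hi.le (le_trans hib hbM) hf
    have h4 : (0:ℝ) ≤ i ^ (e-f) := (Real.rpow_pos_of_pos hi _).le
    nlinarith [(Real.rpow_pos_of_pos hM e).le, (Real.rpow_pos_of_pos hM f).le]

/-- The explicit constant. -/
noncomputable def Cex (p M : ℝ) : ℝ :=
  ((|p-1| * |p-2| * |p-3| * (2:ℝ) ^ |p-4|)/3) * M^3 * (M^(p-4) + 1)
  + (p-1) * (M/12) * (M^(p-2) + M^2)
  + |(p-1)*(p-2)/2| * M^2 * (M^(p-3) + M)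

set_option maxHeartbeats 1600000 in
lemma main_aux (p : ℝ) (hp : 1 < p) {f f1 f2 f3 f4 : ℝ → ℝ} {s : Set ℝ} (hconv : Convex ℝ s)
    {x : ℝ} (hx : x ∈ s)
    (h1 : ∀ y ∈ s, HasDerivAt f (f1 y) y) (h2 : ∀ y ∈ s, HasDerivAt f1 (f2 y) y)
    (h3 : ∀ y ∈ s, HasDerivAt f2 (f3 y) y) (h4 : ∀ y ∈ s, HasDerivAt f3 (f4 y) y)
    (hcf4 : ContinuousOn f4 s)
    {M i s2 : ℝ}
    (hM1 : ∀ y ∈ s, |f1 y| ≤ M) (hM2 : ∀ y ∈ s, |f2 y| ≤ M)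
    (hM3 : ∀ y ∈ s, |f3 y| ≤ M) (hM4 : ∀ y ∈ s, |f4 y| ≤ M)
    (hs2 : ∀ y ∈ s, |f2 y| ≤ s2) (hs2M : s2 ≤ M)
    (hib : i ≤ |f1 x|) (hipos : 0 < i) (hbne : f1 x ≠ 0)
    {r : ℝ} (hr : 0 < r) (hr1 : r < 1/2) (hrs2 : r * s2 ≤ i)
    (hxp : x + r ∈ s) (hxm : x - r ∈ s) :
    |DrOp p r f x - (p-1) * |f1 x| ^ (p-2) * f2 x| ≤ Cex p M * (i ^ (p-4) + 1) * r^2 := by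
  set b := f1 x with hbdef
  set c := f2 x with hcdef
  set d := f3 x with hddef
  clear_value b c d
  have hbpos : 0 < |b| := abs_pos.mpr hbne
  have hbM : |b| ≤ M := by have t := hM1 x hx; rwa [← hbdef] at t
  have hM0 : 0 < M := lt_of_lt_of_le hbpos hbM
  have hcM : |c| ≤ M := by have t := hM2 x hx; rwa [← hcdef] at t
  have hdM : |d| ≤ M := by have t := hM3 x hx; rwa [← hddef] at t
  have hiM : i ≤ M := le_trans hib hbM
  have hs20 : 0 ≤ s2 := le_trans (abs_nonneg _) (hs2 x hx)
  set K3 : ℝ := |p-1| * |p-2| * |p-3| * (2:ℝ) ^ |p-4| with hK3def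
  have hK30 : 0 ≤ K3 := by rw [hK3def]; positivity
  set q : ℝ := (p-1)*(p-2)/2 with hqdef
  clear_value K3 q
  -- continuity facts
  have cf2 : ContinuousOn f2 s := fun y hy => (h3 y hy).continuousAt.continuousWithinAt
  -- Taylor estimates
  have T2p : |f (x+r) - f x - b * r| ≤ s2 * r^2/2 := by
    have := taylor2_bound' hconv hx h1 h2 cf2 hs2 hxp
    rw [show x + r - x = r from by ring, abs_of_pos hr, ← hbdef] at this
    exact this
  have T2m : |f (x-r) - f x + b * r| ≤ s2 * r^2/2 := by
    have := taylor2_bound' hconv hx h1 h2 cf2 hs2 hxm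
    rw [show x - r - x = -r from by ring, abs_neg, abs_of_pos hr, ← hbdef] at this
    calc |f (x-r) - f x + b * r| = |f (x-r) - f x - b * (-r)| := by congr 1; ring
      _ ≤ s2 * r^2/2 := this
  have T4p : |f (x+r) - f x - b*r - c*r^2/2 - d*r^3/6| ≤ M*r^4/24 := by
    have := taylor4_bound' hconv hx h1 h2 h3 h4 hcf4 hM4 hxp
    rw [show x + r - x = r from by ring, abs_of_pos hr, ← hbdef, ← hcdef, ← hddef] at this
    exact this
  have T4m : |f (x-r) - f x + b*r - c*r^2/2 + d*r^3/6| ≤ M*r^4/24 := by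
    have := taylor4_bound' hconv hx h1 h2 h3 h4 hcf4 hM4 hxm
    rw [show x - r - x = -r from by ring, abs_neg, abs_of_pos hr, ← hbdef, ← hcdef, ← hddef] at this
    calc |f (x-r) - f x + b*r - c*r^2/2 + d*r^3/6|
        = |f (x-r) - f x - b*(-r) - c*(-r)^2/2 - d*(-r)^3/6| := by congr 1; ring
      _ ≤ M*r^4/24 := this
  -- normalized increments
  set Ap : ℝ := f (x + r) - f x with hApdef
  set Am : ℝ := f (x - r) - f x with hAmdef
  clear_value Ap Am
  have hrb : r * b ≠ 0 := mul_ne_zero hr.ne' hbne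
  set u : ℝ := Ap/(r*b) - 1 with hudef
  set w : ℝ := Am/(-(r*b)) - 1 with hwdef
  clear_value u w
  have hAp : Ap = r*b*(1+u) := by rw [hudef]; field_simp; ring
  have hAm : Am = -(r*b)*(1+w) := by rw [hwdef]; field_simp; ring
  have hbu : b*u = (Ap - r*b)/r := by rw [hudef]; field_simp
  have hbw : b*w = (-Am - r*b)/r := by rw [hwdef]; field_simp
  -- size estimates on u and w
  have hbu_abs : |b| * |u| ≤ s2 * r / 2 := by
    rw [← abs_mul, hbu, abs_div, abs_of_pos hr]
    rw [div_le_div_iff₀ hr (by norm_num : (0:ℝ) < 2)]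
    calc |Ap - r*b| * 2 ≤ (s2 * r^2/2) * 2 := by
          have : |Ap - r*b| ≤ s2*r^2/2 := by
            calc |Ap - r*b| = |Ap - b*r| := by rw [mul_comm r b]
              _ ≤ s2*r^2/2 := T2p
          linarith
      _ = s2 * r * r := by ring
  have hbw_abs : |b| * |w| ≤ s2 * r / 2 := by
    rw [← abs_mul, hbw, abs_div, abs_of_pos hr]
    rw [div_le_div_iff₀ hr (by norm_num : (0:ℝ) < 2)]
    calc |-Am - r*b| * 2 ≤ (s2 * r^2/2) * 2 := by
          have : |-Am - r*b| ≤ s2*r^2/2 := by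
            calc |-Am - r*b| = |Am + b*r| := by rw [abs_sub_comm]; congr 1; ring
              _ ≤ s2*r^2/2 := T2m
          linarith
      _ = s2 * r * r := by ring
  have hsri : s2 * r ≤ |b| := by
    calc s2 * r = r * s2 := by ring
      _ ≤ i := hrs2
      _ ≤ |b| := hib
  have hu2 : |u| ≤ 1/2 := by
    by_contra h
    push_neg at h
    have : |b| * (1/2) < |b| * |u| := by
      apply mul_lt_mul_of_pos_left h hbpos
    linarith [hbu_abs, hsri]
  have hw2 : |w| ≤ 1/2 := by
    by_contra h
    push_neg at h
    have : |b| * (1/2) < |b| * |w| := by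
      apply mul_lt_mul_of_pos_left h hbpos
    linarith [hbw_abs, hsri]
  have h1u : (0:ℝ) < 1 + u := by have := (abs_le.mp hu2).1; linarith
  have h1w : (0:ℝ) < 1 + w := by have := (abs_le.mp hw2).1; linarith
  -- key identities for b(u±w)
  have E1 : |b*(u-w) - c*r| ≤ M*r^3/12 := by
    have e : b*(u-w) - c*r = ((Ap - b*r - c*r^2/2 - d*r^3/6) + (Am + b*r - c*r^2/2 + d*r^3/6))/r := by
      rw [mul_sub, hbu, hbw]; field_simp; ring
    have h := abs_add_le (Ap - b*r - c*r^2/2 - d*r^3/6) (Am + b*r - c*r^2/2 + d*r^3/6)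
    have hnum : |(Ap - b*r - c*r^2/2 - d*r^3/6) + (Am + b*r - c*r^2/2 + d*r^3/6)| ≤ (M*r^3/12)*r := by
      have : M*r^4/24 + M*r^4/24 = (M*r^3/12)*r := by ring
      linarith only [h, T4p, T4m, this]
    rw [e, abs_div, abs_of_pos hr, div_le_iff₀ hr]
    linarith only [hnum]
  have E2 : |b*(u+w)| ≤ M*r^2/2 := by
    have e : b*(u+w) = ((Ap - b*r - c*r^2/2 - d*r^3/6) - (Am + b*r - c*r^2/2 + d*r^3/6) + d*r^3/3)/r := by
      rw [mul_add, hbu, hbw]; field_simp; ring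
    have h := abs_add_le ((Ap - b*r - c*r^2/2 - d*r^3/6) - (Am + b*r - c*r^2/2 + d*r^3/6)) (d*r^3/3)
    have h2' := abs_sub (Ap - b*r - c*r^2/2 - d*r^3/6) (Am + b*r - c*r^2/2 + d*r^3/6)
    have h3' : |d*r^3/3| = |d| * r^3/3 := by rw [abs_div, abs_mul, abs_pow, abs_of_pos hr]; norm_num
    have p1 : |d| * r^3 ≤ M * r^3 := mul_le_mul_of_nonneg_right hdM (by positivity)
    have key : M * r^3 * (r/12 - 1/6) ≤ 0 :=
      mul_nonpos_of_nonneg_of_nonpos (by positivity) (by linarith only [hr1])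
    have hnum : |(Ap - b*r - c*r^2/2 - d*r^3/6) - (Am + b*r - c*r^2/2 + d*r^3/6) + d*r^3/3| ≤ (M*r^2/2)*r := by
      have s1 : |(Ap - b*r - c*r^2/2 - d*r^3/6) - (Am + b*r - c*r^2/2 + d*r^3/6) + d*r^3/3|
          ≤ (M*r^4/24 + M*r^4/24) + M*r^3/3 := by
        linarith only [h, h2', h3', T4p, T4m, p1]
      have s2 : (M*r^4/24 + M*r^4/24) + M*r^3/3 ≤ (M*r^2/2)*r := by
        linarith only [key]
      linarith only [s1, s2]
    rw [e, abs_div, abs_of_pos hr, div_le_iff₀ hr]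
    linarith only [hnum]
  have E3 : |b*(u-w)| ≤ 2*M*r := by
    have h := abs_add_le (b*(u-w) - c*r) (c*r)
    rw [sub_add_cancel] at h
    have h2' : |c*r| = |c| * r := by rw [abs_mul, abs_of_pos hr]
    have p1 : |c| * r ≤ M * r := mul_le_mul_of_nonneg_right hcM hr.le
    have key : M * r * (r^2 - 1) ≤ 0 :=
      mul_nonpos_of_nonneg_of_nonpos (by positivity) (by nlinarith [sq_nonneg r, hr, hr1])
    have hMr : 0 ≤ M * r := mul_nonneg hM0.le hr.le
    linarith only [h, h2', p1, key, E1, hMr]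
  -- the transformed operator
  set P2 : ℝ := |b| ^ (p-2) with hP2def
  clear_value P2
  have hP20 : 0 ≤ P2 := by rw [hP2def]; exact (Real.rpow_pos_of_pos hbpos _).le
  have hJpAp : Jp p Ap = r^(p-1) * (P2 * b * (1+u)^(p-1)) := by
    have habsAp : |Ap| = r * |b| * (1+u) := by
      rw [hAp, abs_mul, abs_mul, abs_of_pos hr, abs_of_pos h1u]
    show |Ap| ^ (p-2) * Ap = _
    rw [hP2def, habsAp, hAp, Real.mul_rpow (by positivity) h1u.le,
      Real.mul_rpow hr.le (abs_nonneg b)]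
    rw [show r^(p-2) * |b|^(p-2) * (1+u)^(p-2) * (r*b*(1+u))
        = (r^(p-2)*r) * (|b|^(p-2) * b * ((1+u)^(p-2)*(1+u))) from by ring]
    rw [← Real.rpow_add_one hr.ne' (p-2), ← Real.rpow_add_one h1u.ne' (p-2)]
    rw [show p-2+1 = p-1 from by ring]
  have hJpAm : Jp p Am = -(r^(p-1) * (P2 * b * (1+w)^(p-1))) := by
    have habsAm : |Am| = r * |b| * (1+w) := by
      rw [hAm, abs_mul, abs_neg, abs_mul, abs_of_pos hr, abs_of_pos h1w]
    show |Am| ^ (p-2) * Am = _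
    rw [hP2def, habsAm, hAm, Real.mul_rpow (by positivity) h1w.le,
      Real.mul_rpow hr.le (abs_nonneg b)]
    rw [show r^(p-2) * |b|^(p-2) * (1+w)^(p-2) * (-(r*b)*(1+w))
        = -((r^(p-2)*r) * (|b|^(p-2) * b * ((1+w)^(p-2)*(1+w)))) from by ring]
    rw [← Real.rpow_add_one hr.ne' (p-2), ← Real.rpow_add_one h1w.ne' (p-2)]
    rw [show p-2+1 = p-1 from by ring]
  have hrp1 : (0:ℝ) < r^(p-1) := Real.rpow_pos_of_pos hr _
  have hDr : DrOp p r f x = P2 * b * ((1+u)^(p-1) - (1+w)^(p-1)) / r := by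
    rw [show DrOp p r f x = (Jp p Ap + Jp p Am) / r^p from by rw [hApdef, hAmdef]; rfl]
    rw [hJpAp, hJpAm, show r^p = r^(p-1) * r from by
      rw [← Real.rpow_add_one hr.ne' (p-1), show p-1+1 = p from by ring]]
    field_simp
    ring
  -- decomposition
  set Hu : ℝ := (1+u)^(p-1) - 1 - (p-1)*u - q*u^2 with hHudef
  set Hw : ℝ := (1+w)^(p-1) - 1 - (p-1)*w - q*w^2 with hHwdef
  clear_value Hu Hw
  have hHu : |Hu| ≤ K3 * |u|^3 / 6 := by
    have := hfun_cubic p (abs_le.mp hu2)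
    rw [hHudef, hqdef, hK3def]
    exact this
  have hHw : |Hw| ≤ K3 * |w|^3 / 6 := by
    have := hfun_cubic p (abs_le.mp hw2)
    rw [hHwdef, hqdef, hK3def]
    exact this
  set A : ℝ := (b*Hu - b*Hw)/r with hAdef
  set B : ℝ := (p-1)*(b*(u-w) - c*r)/r with hBdef
  set Cc : ℝ := q*(b*(u+w))*(u-w)/r with hCcdef
  clear_value A B Cc
  have hkey : DrOp p r f x - (p-1) * P2 * c = P2 * (A + B + Cc) := by
    rw [hDr, hAdef, hBdef, hCcdef, hHudef, hHwdef]
    field_simp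
    ring
  -- rpow bookkeeping
  have hb4 : P2 * |b| = |b|^(p-4) * |b|^3 := by
    rw [hP2def, ← Real.rpow_natCast |b| 3, ← Real.rpow_add hbpos,
      ← Real.rpow_add_one (ne_of_gt hbpos)]
    congr 1
    push_cast; ring
  have hb3 : |b|^(p-3) * |b| = P2 := by
    rw [hP2def, ← Real.rpow_add_one (ne_of_gt hbpos)]
    congr 1; ring
  have hbp4 : (0:ℝ) ≤ |b|^(p-4) := (Real.rpow_pos_of_pos hbpos _).le
  have hbp3 : (0:ℝ) ≤ |b|^(p-3) := (Real.rpow_pos_of_pos hbpos _).le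
  -- claim A
  have hsrM : s2 * r ≤ M * r := mul_le_mul_of_nonneg_right hs2M hr.le
  have hbu' : |b| * |u| ≤ M*r/2 := by linarith only [hbu_abs, hsrM]
  have hbw' : |b| * |w| ≤ M*r/2 := by linarith only [hbw_abs, hsrM]
  have hcubeu : (|b| * |u|)^3 ≤ (M*r/2)^3 := by
    gcongr
  have hcubew : (|b| * |w|)^3 ≤ (M*r/2)^3 := by
    gcongr
  have claimA : P2 * |A| ≤ (K3/3) * M^3 * |b|^(p-4) * r^2 := by
    have habsA : |A| ≤ (|b| * (K3 * |u|^3/6) + |b| * (K3 * |w|^3/6))/r := by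
      rw [hAdef, abs_div, abs_of_pos hr]
      apply (div_le_div_iff_of_pos_right hr).mpr
      calc |b*Hu - b*Hw| ≤ |b*Hu| + |b*Hw| := abs_sub _ _
        _ = |b| * |Hu| + |b| * |Hw| := by rw [abs_mul, abs_mul]
        _ ≤ |b| * (K3 * |u|^3/6) + |b| * (K3 * |w|^3/6) := by
            have g1 := mul_le_mul_of_nonneg_left hHu (abs_nonneg b)
            have g2 := mul_le_mul_of_nonneg_left hHw (abs_nonneg b)
            linarith only [g1, g2]
    have step : P2 * |A| ≤ P2 * ((|b| * (K3 * |u|^3/6) + |b| * (K3 * |w|^3/6))/r) :=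
      mul_le_mul_of_nonneg_left habsA hP20
    have e1 : P2 * ((|b| * (K3 * |u|^3/6) + |b| * (K3 * |w|^3/6))/r)
        = (K3/(6*r)) * (|b|^(p-4) * (|b| * |u|)^3 + |b|^(p-4) * (|b| * |w|)^3) := by
      have expand : P2 * ((|b| * (K3 * |u|^3/6) + |b| * (K3 * |w|^3/6))/r)
          = (K3/(6*r)) * ((P2 * |b|) * |u|^3 + (P2 * |b|) * |w|^3) := by
        field_simp
      rw [expand, hb4]
      ring
    have hK3r : 0 ≤ K3/(6*r) := div_nonneg hK30 (by linarith only [hr])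
    have step2 : (K3/(6*r)) * (|b|^(p-4) * (|b| * |u|)^3 + |b|^(p-4) * (|b| * |w|)^3)
        ≤ (K3/(6*r)) * (|b|^(p-4) * (M*r/2)^3 + |b|^(p-4) * (M*r/2)^3) := by
      apply mul_le_mul_of_nonneg_left _ hK3r
      have g1 := mul_le_mul_of_nonneg_left hcubeu hbp4
      have g2 := mul_le_mul_of_nonneg_left hcubew hbp4
      linarith only [g1, g2]
    have e2 : (K3/(6*r)) * (|b|^(p-4) * (M*r/2)^3 + |b|^(p-4) * (M*r/2)^3)
        = (K3/24) * M^3 * |b|^(p-4) * r^2 := by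
      field_simp; ring
    have final : (K3/24) * M^3 * |b|^(p-4) * r^2 ≤ (K3/3) * M^3 * |b|^(p-4) * r^2 := by
      have h0 : 0 ≤ M^3 * (|b|^(p-4) * r^2) := by
        apply mul_nonneg (by positivity) (mul_nonneg hbp4 (sq_nonneg r))
      linarith only [mul_le_mul_of_nonneg_right (show K3/24 ≤ K3/3 from by linarith only [hK30]) h0]
    calc P2 * |A| ≤ P2 * ((|b| * (K3 * |u|^3/6) + |b| * (K3 * |w|^3/6))/r) := step
      _ = (K3/(6*r)) * (|b|^(p-4) * (|b| * |u|)^3 + |b|^(p-4) * (|b| * |w|)^3) := e1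
      _ ≤ (K3/(6*r)) * (|b|^(p-4) * (M*r/2)^3 + |b|^(p-4) * (M*r/2)^3) := step2
      _ = (K3/24) * M^3 * |b|^(p-4) * r^2 := e2
      _ ≤ (K3/3) * M^3 * |b|^(p-4) * r^2 := final
  -- claim B
  have hp1 : (0:ℝ) < p - 1 := by linarith only [hp]
  have claimB : P2 * |B| ≤ (p-1) * (M/12) * P2 * r^2 := by
    have habsB : |B| = (p-1) * |b*(u-w) - c*r| / r := by
      rw [hBdef, abs_div, abs_of_pos hr, abs_mul, abs_of_pos hp1]
    have hBB : |B| ≤ (p-1) * (M*r^3/12) / r := by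
      rw [habsB]
      apply (div_le_div_iff_of_pos_right hr).mpr
      exact mul_le_mul_of_nonneg_left E1 hp1.le
    have e : (p-1) * (M*r^3/12) / r = (p-1) * (M/12) * r^2 := by
      field_simp
    calc P2 * |B| ≤ P2 * ((p-1) * (M*r^3/12) / r) := mul_le_mul_of_nonneg_left hBB hP20
      _ = (p-1) * (M/12) * P2 * r^2 := by rw [e]; ring
  -- claim C
  have hq0 : (0:ℝ) ≤ |q| := abs_nonneg q
  have huw : |u-w| ≤ 2*M*r/|b| := by
    rw [le_div_iff₀ hbpos, mul_comm |u-w| |b|, ← abs_mul]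
    exact E3
  have claimC : P2 * |Cc| ≤ |q| * M^2 * |b|^(p-3) * r^2 := by
    have habsC : |Cc| = |q| * |b*(u+w)| * |u-w| / r := by
      rw [hCcdef, abs_div, abs_of_pos hr, abs_mul, abs_mul]
    have hCC : |Cc| ≤ |q| * (M*r^2/2) * (2*M*r/|b|) / r := by
      rw [habsC]
      apply (div_le_div_iff_of_pos_right hr).mpr
      have g1 : |q| * |b*(u+w)| ≤ |q| * (M*r^2/2) := mul_le_mul_of_nonneg_left E2 hq0
      apply mul_le_mul g1 huw (abs_nonneg _)
      apply mul_nonneg hq0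
      exact div_nonneg (mul_nonneg hM0.le (sq_nonneg r)) (by norm_num)
    have step : P2 * |Cc| ≤ P2 * (|q| * (M*r^2/2) * (2*M*r/|b|) / r) :=
      mul_le_mul_of_nonneg_left hCC hP20
    have e : P2 * (|q| * (M*r^2/2) * (2*M*r/|b|) / r) = |q| * M^2 * (P2 / |b|) * r^2 := by
      field_simp
    have e2 : P2 / |b| = |b|^(p-3) := by
      rw [← hb3]
      field_simp
    calc P2 * |Cc| ≤ P2 * (|q| * (M*r^2/2) * (2*M*r/|b|) / r) := step
      _ = |q| * M^2 * (P2 / |b|) * r^2 := e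
      _ = |q| * M^2 * |b|^(p-3) * r^2 := by rw [e2]
  -- interpolation estimates
  have I4 : |b|^(p-4) ≤ (M^(p-4) + 1) * (i^(p-4) + 1) := by
    have := rpow_interp (e := p-4) (f := 0) hipos hib hbM le_rfl
    rwa [Real.rpow_zero, sub_zero] at this
  have I2 : P2 ≤ (M^(p-2) + M^2) * (i^(p-4) + 1) := by
    have := rpow_interp (e := p-2) (f := 2) hipos hib hbM (by norm_num)
    rw [show p-2-2 = p-4 from by ring] at this
    rw [hP2def]
    rwa [show ((2:ℝ)) = ((2:ℕ):ℝ) from by norm_num, Real.rpow_natCast] at this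
  have I3 : |b|^(p-3) ≤ (M^(p-3) + M) * (i^(p-4) + 1) := by
    have := rpow_interp (e := p-3) (f := 1) hipos hib hbM (by norm_num)
    rw [show p-3-1 = p-4 from by ring, Real.rpow_one] at this
    exact this
  have hi40 : (0:ℝ) ≤ i^(p-4) + 1 := by
    have := (Real.rpow_pos_of_pos hipos (p-4)).le
    linarith only [this]
  -- combine
  have htot : |DrOp p r f x - (p-1) * P2 * c| ≤ P2 * |A| + P2 * |B| + P2 * |Cc| := by
    rw [hkey, abs_mul, abs_of_nonneg hP20]
    have h3 := abs_add_three A B Cc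
    have := mul_le_mul_of_nonneg_left h3 hP20
    linarith only [this]
  have FA : P2 * |A| ≤ (K3/3) * M^3 * ((M^(p-4) + 1) * (i^(p-4) + 1)) * r^2 := by
    refine claimA.trans ?_
    have hnn : 0 ≤ (K3/3) * M^3 := mul_nonneg (by linarith only [hK30]) (by positivity)
    have h1' := mul_le_mul_of_nonneg_left I4 hnn
    have := mul_le_mul_of_nonneg_right h1' (sq_nonneg r)
    calc (K3/3) * M^3 * |b|^(p-4) * r^2 = ((K3/3) * M^3) * |b|^(p-4) * r^2 := by ring
      _ ≤ ((K3/3) * M^3) * ((M^(p-4) + 1) * (i^(p-4) + 1)) * r^2 := this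
      _ = (K3/3) * M^3 * ((M^(p-4) + 1) * (i^(p-4) + 1)) * r^2 := by ring
  have FB : P2 * |B| ≤ (p-1) * (M/12) * ((M^(p-2) + M^2) * (i^(p-4) + 1)) * r^2 := by
    refine claimB.trans ?_
    have hnn : 0 ≤ (p-1) * (M/12) := mul_nonneg hp1.le (by linarith only [hM0])
    have h1' := mul_le_mul_of_nonneg_left I2 hnn
    have := mul_le_mul_of_nonneg_right h1' (sq_nonneg r)
    calc (p-1) * (M/12) * P2 * r^2 = ((p-1) * (M/12)) * P2 * r^2 := by ring
      _ ≤ ((p-1) * (M/12)) * ((M^(p-2) + M^2) * (i^(p-4) + 1)) * r^2 := this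
      _ = (p-1) * (M/12) * ((M^(p-2) + M^2) * (i^(p-4) + 1)) * r^2 := by ring
  have FC : P2 * |Cc| ≤ |q| * M^2 * ((M^(p-3) + M) * (i^(p-4) + 1)) * r^2 := by
    refine claimC.trans ?_
    have hnn : 0 ≤ |q| * M^2 := mul_nonneg hq0 (sq_nonneg M)
    have h1' := mul_le_mul_of_nonneg_left I3 hnn
    have := mul_le_mul_of_nonneg_right h1' (sq_nonneg r)
    calc |q| * M^2 * |b|^(p-3) * r^2 = (|q| * M^2) * |b|^(p-3) * r^2 := by ring
      _ ≤ (|q| * M^2) * ((M^(p-3) + M) * (i^(p-4) + 1)) * r^2 := this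
      _ = |q| * M^2 * ((M^(p-3) + M) * (i^(p-4) + 1)) * r^2 := by ring
  show |DrOp p r f x - (p-1) * P2 * c| ≤ Cex p M * (i^(p-4) + 1) * r^2
  rw [show Cex p M = (K3/3) * M^3 * (M^(p-4) + 1) + (p-1) * (M/12) * (M^(p-2) + M^2)
      + |q| * M^2 * (M^(p-3) + M) from by rw [Cex, hK3def, hqdef]]
  linarith only [htot, FA, FB, FC]

set_option maxHeartbeats 1600000 in
/-- One-dimensional quadratic expansion of `D_r[φ](x)` away from
critical points, for every `p > 1`. -/
theorem statement16 (p : ℝ) (hp : 1 < p) (x R : ℝ) (hR0 : 0 < R) (hR1 : R < 1)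
    (φ : ℝ → ℝ) (M : ℝ) (hφ : C4bOn1 φ (Set.Ioo (x - R) (x + R)) M)
    (hd1 : ∀ y ∈ Set.Icc (x - R) (x + R), deriv φ y ≠ 0) :
    ∃ C > 0, ∀ r : ℝ, 0 < r →
      r < min (derivInfOn φ (Set.Ioo (x - R) (x + R)) /
          deriv2SupOn φ (Set.Ioo (x - R) (x + R))) (R / 2) →
      |DrOp p r φ x - (p - 1) * |deriv φ x| ^ (p - 2) * deriv (deriv φ) x| ≤
        C * ((derivInfOn φ (Set.Ioo (x - R) (x + R))) ^ (p - 4) + 1) * r ^ 2 := by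
  obtain ⟨hc4, hbnd⟩ := hφ
  set s : Set ℝ := Set.Ioo (x - R) (x + R) with hsdef
  have sopen : IsOpen s := isOpen_Ioo
  have sconv : Convex ℝ s := convex_Ioo _ _
  have hxs : x ∈ s := by constructor <;> linarith
  -- pointwise derivative bounds
  have hIt : ∀ k : ℕ, k ≤ 4 → ∀ y ∈ s, |deriv^[k] φ y| ≤ M := by
    intro k hk y hy
    have := hbnd k hk y hy
    rwa [iteratedDerivWithin_isOpen' k sopen hy, iteratedDeriv_eq_iterate] at this
  have e2 : deriv^[2] φ = deriv (deriv φ) := rfl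
  have e3 : deriv^[3] φ = deriv (deriv (deriv φ)) := rfl
  have e4 : deriv^[4] φ = deriv (deriv (deriv (deriv φ))) := rfl
  have hM1 : ∀ y ∈ s, |deriv φ y| ≤ M := by
    intro y hy; simpa using hIt 1 (by norm_num) y hy
  have hM2 : ∀ y ∈ s, |deriv (deriv φ) y| ≤ M := by
    intro y hy; have := hIt 2 (by norm_num) y hy; rwa [e2] at this
  have hM3 : ∀ y ∈ s, |deriv (deriv (deriv φ)) y| ≤ M := by
    intro y hy; have := hIt 3 (by norm_num) y hy; rwa [e3] at this
  have hM4 : ∀ y ∈ s, |deriv (deriv (deriv (deriv φ))) y| ≤ M := by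
    intro y hy; have := hIt 4 (by norm_num) y hy; rwa [e4] at this
  -- derivative chain
  have hder1 : ∀ y ∈ s, HasDerivAt φ (deriv φ y) y := fun y hy =>
    ((hc4.differentiableOn (by norm_num)).differentiableAt (sopen.mem_nhds hy)).hasDerivAt
  have hc3 : ContDiffOn ℝ 3 (deriv φ) s := hc4.deriv_of_isOpen sopen (by norm_num)
  have hder2 : ∀ y ∈ s, HasDerivAt (deriv φ) (deriv (deriv φ) y) y := fun y hy =>
    ((hc3.differentiableOn (by norm_num)).differentiableAt (sopen.mem_nhds hy)).hasDerivAt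
  have hc2 : ContDiffOn ℝ 2 (deriv (deriv φ)) s := hc3.deriv_of_isOpen sopen (by norm_num)
  have hder3 : ∀ y ∈ s, HasDerivAt (deriv (deriv φ)) (deriv (deriv (deriv φ)) y) y := fun y hy =>
    ((hc2.differentiableOn (by norm_num)).differentiableAt (sopen.mem_nhds hy)).hasDerivAt
  have hc1 : ContDiffOn ℝ 1 (deriv (deriv (deriv φ))) s := hc2.deriv_of_isOpen sopen (by norm_num)
  have hder4 : ∀ y ∈ s, HasDerivAt (deriv (deriv (deriv φ)))
      (deriv (deriv (deriv (deriv φ))) y) y := fun y hy =>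
    ((hc1.differentiableOn (by norm_num)).differentiableAt (sopen.mem_nhds hy)).hasDerivAt
  have hc0 : ContDiffOn ℝ 0 (deriv (deriv (deriv (deriv φ)))) s :=
    hc1.deriv_of_isOpen sopen (by norm_num)
  have hcf4 : ContinuousOn (deriv (deriv (deriv (deriv φ)))) s := hc0.continuousOn
  -- inf and sup quantities
  have hbne : deriv φ x ≠ 0 := hd1 x ⟨by linarith, by linarith⟩
  have hM0 : 0 < M := lt_of_lt_of_le (abs_pos.mpr hbne) (hM1 x hxs)
  have hib : derivInfOn φ s ≤ |deriv φ x| := by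
    show sInf ((fun y => |deriv φ y|) '' s) ≤ _
    exact csInf_le ⟨0, by rintro z ⟨y, hy, rfl⟩; exact abs_nonneg _⟩ ⟨x, hxs, rfl⟩
  have hs2ub : ∀ y ∈ s, |deriv (deriv φ) y| ≤ deriv2SupOn φ s := by
    intro y hy
    show _ ≤ sSup ((fun y => |deriv (deriv φ) y|) '' s)
    exact le_csSup ⟨M, by rintro z ⟨y', hy', rfl⟩; exact hM2 y' hy'⟩ ⟨y, hy, rfl⟩
  have hs2M : deriv2SupOn φ s ≤ M := by
    show sSup ((fun y => |deriv (deriv φ) y|) '' s) ≤ M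
    exact Real.sSup_le (by rintro z ⟨y, hy, rfl⟩; exact hM2 y hy)
      (le_trans (abs_nonneg _) (hM2 x hxs))
  -- the constant
  refine ⟨Cex p M + 1, ?_, ?_⟩
  · have t1 : 0 ≤ ((|p-1| * |p-2| * |p-3| * (2:ℝ) ^ |p-4|)/3) * M^3 * (M^(p-4) + 1) := by
      apply mul_nonneg (mul_nonneg (by positivity) (pow_nonneg hM0.le 3))
      have := Real.rpow_nonneg hM0.le (p-4); linarith
    have t2 : 0 ≤ (p-1) * (M/12) * (M^(p-2) + M^2) := by
      apply mul_nonneg (mul_nonneg (by linarith) (by linarith))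
      have := Real.rpow_nonneg hM0.le (p-2)
      have := sq_nonneg M; linarith
    have t3 : 0 ≤ |(p-1)*(p-2)/2| * M^2 * (M^(p-3) + M) := by
      apply mul_nonneg (mul_nonneg (abs_nonneg _) (sq_nonneg M))
      have := Real.rpow_nonneg hM0.le (p-3); linarith
    have : 0 ≤ Cex p M := by rw [Cex]; linarith
    linarith
  · intro r hr hrmin
    rw [lt_min_iff] at hrmin
    obtain ⟨hri, hrR⟩ := hrmin
    have hs2v0 : 0 ≤ deriv2SupOn φ s := le_trans (abs_nonneg _) (hs2ub x hxs)
    have hs2vpos : 0 < deriv2SupOn φ s := by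
      rcases eq_or_lt_of_le hs2v0 with h | h
      · exfalso; rw [← h, div_zero] at hri; linarith
      · exact h
    have hrs2 : r * deriv2SupOn φ s < derivInfOn φ s := (lt_div_iff₀ hs2vpos).mp hri
    have hipos : 0 < derivInfOn φ s := lt_of_le_of_lt (mul_nonneg hr.le hs2v0) hrs2
    have hr12 : r < 1/2 := by linarith
    have hxp : x + r ∈ s := ⟨by linarith, by linarith⟩
    have hxm : x - r ∈ s := ⟨by linarith, by linarith⟩
    have key := main_aux p hp sconv hxs hder1 hder2 hder3 hder4 hcf4 hM1 hM2 hM3 hM4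
      hs2ub hs2M hib hipos hbne hr hr12 hrs2.le hxp hxm
    refine key.trans ?_
    have hX : 0 ≤ (derivInfOn φ s ^ (p-4) + 1) * r^2 := by
      apply mul_nonneg _ (sq_nonneg r)
      have := Real.rpow_nonneg hipos.le (p-4); linarith
    have := mul_le_mul_of_nonneg_right (show Cex p M ≤ Cex p M + 1 from by linarith) hX
    linarith only [this]

end
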